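/- arXiv:1812.03737 — 4 statements merged into one kernel-verified Lean document; each statement's English description precedes it below -/
import Mathlib

section
/- Let Π be an N-gon with N = (d+1)n + d - 1 vertices, where d ≥ 1 and n > 0. Then every maximal d-Brauer relation on Π (a maximal set of pairwise disjoint d-diagonals) contains exactly n diagonals. -/
namespace BrauerComb

/-- `x` lies strictly between `a` and `b` in clockwise order on the `N`-gon,
where vertices are numbered clockwise by `ZMod N`. -/
def Between {N : ℕ} (a b x : ZMod N) : Prop :=
  0 < (x - a).val ∧ (x - a).val < (b - a).val

/-- Two chords of the `N`-gon cross in the interior. -/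
def Crosses {N : ℕ} (X Y : Sym2 (ZMod N)) : Prop :=
  ∃ a b c e : ZMod N, X = s(a, b) ∧ Y = s(c, e) ∧ Xor' (Between a b c) (Between a b e)

/-- Two chords are disjoint: they share no vertex and do not cross. -/
def DisjointDiag {N : ℕ} (X Y : Sym2 (ZMod N)) : Prop :=
  (∀ v : ZMod N, ¬ (v ∈ X ∧ v ∈ Y)) ∧ ¬ Crosses X Y

/-- A `d`-diagonal of the `N`-gon: a diagonal of the form `(i, i + d + j*(d+1))`
with `0 ≤ j ≤ n - 1`. -/
def IsDDiag {N : ℕ} (d n : ℕ) (X : Sym2 (ZMod N)) : Prop :=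
  ∃ (i : ZMod N) (j : ℕ), j ≤ n - 1 ∧ X = s(i, i + ((d + (d + 1) * j : ℕ) : ZMod N))

/-- A `d`-Brauer relation: a set of pairwise disjoint `d`-diagonals. -/
def IsBrauer {N : ℕ} (d n : ℕ) (B : Set (Sym2 (ZMod N))) : Prop :=
  (∀ X ∈ B, IsDDiag d n X) ∧ ∀ X ∈ B, ∀ Y ∈ B, X ≠ Y → DisjointDiag X Y

/-- A maximal `d`-Brauer relation. -/
def IsMaxBrauer {N : ℕ} (d n : ℕ) (B : Set (Sym2 (ZMod N))) : Prop :=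
  IsBrauer d n B ∧ ∀ B' : Set (Sym2 (ZMod N)), IsBrauer d n B' → B ⊆ B' → B' = B

end BrauerComb

namespace BrauerComb

/-!
Cutting the polygon open at vertex `0` turns the chord `{p, q}`, `p < q`, into the interval
`[p, q]` of `{0, …, N - 1}`. Two chords are disjoint exactly when their intervals are disjoint or
strictly nested, and since `N ≡ -2 (mod d + 1)` a chord is a `d`-diagonal exactly when its
interval has length divisible by `m = d + 1`, whichever of its two arcs is the interval.

So it suffices to show that a maximal family `C` of such pairwise compatible intervals of a
segment of length `L` has `⌊L / m⌋` members, which follows from the stronger claim that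
`m * |C|` plus the number of uncovered points is `L`, with fewer than `m` uncovered points.
Induct on `L` and look at the first point `lo`. If a member `[lo, b]` covers it, the members
inside and to the right of it are maximal families of the shorter segments, and the inside one
leaves exactly `m - 2` points uncovered, that number being `≡ -2 (mod m)` and less than `m`.
If `lo` is uncovered and `m` points were uncovered, the last uncovered point `y` would be
followed by a segment tiled by members, so `[lo, y]` would have length divisible by `m` and
could be added to `C`.
-/

def IsBlock (m lo hi : ℕ) (c : ℕ × ℕ) : Prop :=
  lo ≤ c.1 ∧ c.1 < c.2 ∧ c.2 ≤ hi ∧ m ∣ c.2 + 1 - c.1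

def Compatible (c c' : ℕ × ℕ) : Prop :=
  c.2 < c'.1 ∨ c'.2 < c.1 ∨ (c.1 < c'.1 ∧ c'.2 < c.2) ∨ (c'.1 < c.1 ∧ c.2 < c'.2)

theorem Compatible.symm {c c' : ℕ × ℕ} (h : Compatible c c') : Compatible c' c := by
  unfold Compatible at *
  omega

structure IsMaximalFamily (m lo hi : ℕ) (C : Set (ℕ × ℕ)) : Prop where
  isBlock : ∀ c ∈ C, IsBlock m lo hi c
  pairwise : C.Pairwise Compatible
  maximal : ∀ c, IsBlock m lo hi c → (∀ c' ∈ C, Compatible c c') → c ∈ C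

def Covers (C : Set (ℕ × ℕ)) (p : ℕ) : Prop :=
  ∃ c ∈ C, c.1 ≤ p ∧ p ≤ c.2

open Classical in
noncomputable def freePoints (lo hi : ℕ) (C : Set (ℕ × ℕ)) : Finset ℕ :=
  (Finset.Icc lo hi).filter fun p => ¬ Covers C p

theorem mem_freePoints {lo hi p : ℕ} {C : Set (ℕ × ℕ)} :
    p ∈ freePoints lo hi C ↔ lo ≤ p ∧ p ≤ hi ∧ ¬ Covers C p := by
  simp [freePoints, and_assoc]

theorem freePoints_eq_insert {lo hi : ℕ} {C : Set (ℕ × ℕ)}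
    (hle : lo ≤ hi) (hlo : ¬ Covers C lo) :
    freePoints lo hi C = insert lo (freePoints (lo + 1) hi C) := by
  ext p
  simp only [Finset.mem_insert, mem_freePoints]
  constructor
  · rintro ⟨h1, h2, h3⟩
    rcases h1.eq_or_lt with rfl | h1
    · exact .inl rfl
    · exact .inr ⟨h1, h2, h3⟩
  · rintro (rfl | ⟨h1, h2, h3⟩)
    · exact ⟨le_rfl, hle, hlo⟩
    · exact ⟨by omega, h2, h3⟩

/-- Equivalently: `C` has `(hi + 1 - lo) / m` members and leaves `(hi + 1 - lo) % m` points of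
`[lo, hi]` uncovered. -/
def IsTight (m lo hi : ℕ) (C : Set (ℕ × ℕ)) : Prop :=
  m * C.ncard + (freePoints lo hi C).card = hi + 1 - lo ∧ (freePoints lo hi C).card < m

namespace IsMaximalFamily

variable {m lo hi : ℕ} {C : Set (ℕ × ℕ)}

theorem finite (hC : IsMaximalFamily m lo hi C) : C.Finite :=
  ((Set.finite_Icc lo hi).prod (Set.finite_Icc lo hi)).subset fun c hc => by
    obtain ⟨h1, h2, h3, -⟩ := hC.isBlock c hc
    exact ⟨⟨h1, by omega⟩, by omega, h3⟩

theorem eq_or_compatible (hC : IsMaximalFamily m lo hi C) {c c' : ℕ × ℕ} (hc : c ∈ C)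
    (hc' : c' ∈ C) : c = c' ∨ Compatible c c' := by
  by_cases h : c = c'
  · exact .inl h
  · exact .inr (hC.pairwise hc hc' h)

theorem inner (hC : IsMaximalFamily m lo hi C) {X : ℕ × ℕ} (hX : X ∈ C) :
    IsMaximalFamily m (X.1 + 1) (X.2 - 1) {c ∈ C | X.1 < c.1 ∧ c.2 < X.2} where
  isBlock c hc := by
    obtain ⟨hcC, hX1, hX2⟩ := hc
    obtain ⟨-, h2, -, h4⟩ := hC.isBlock c hcC
    exact ⟨hX1, h2, by omega, h4⟩
  pairwise := hC.pairwise.mono fun _ hc => hc.1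
  maximal c hc hcomp := by
    obtain ⟨h1, h2, h3, h4⟩ := hc
    obtain ⟨hX1, hX2, hX3, -⟩ := hC.isBlock X hX
    refine ⟨hC.maximal c ⟨by omega, h2, by omega, h4⟩ fun c' hc' => ?_, by omega, by omega⟩
    by_cases hin : X.1 < c'.1 ∧ c'.2 < X.2
    · exact hcomp c' ⟨hc', hin⟩
    · have := (hC.isBlock c' hc').2.1
      rcases hC.eq_or_compatible hc' hX with rfl | hc'X <;>
        · unfold Compatible at *
          omega

theorem tail (hC : IsMaximalFamily m lo hi C) {y : ℕ} (hlo : lo ≤ y)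
    (hy : ∀ c ∈ C, c.2 ≤ y ∨ y < c.1) :
    IsMaximalFamily m (y + 1) hi {c ∈ C | y < c.1} where
  isBlock c hc := by
    obtain ⟨-, h2, h3, h4⟩ := hC.isBlock c hc.1
    exact ⟨hc.2, h2, h3, h4⟩
  pairwise := hC.pairwise.mono fun _ hc => hc.1
  maximal c hc hcomp := by
    obtain ⟨h1, h2, h3, h4⟩ := hc
    refine ⟨hC.maximal c ⟨by omega, h2, h3, h4⟩ fun c' hc' => ?_, by omega⟩
    rcases hy c' hc' with h | h
    · unfold Compatible
      omega
    · exact hcomp c' ⟨hc', h⟩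

theorem freePoints_tail (hC : IsMaximalFamily m lo hi C) {y : ℕ} (hlo : lo ≤ y)
    (hy : ∀ c ∈ C, c.2 ≤ y ∨ y < c.1) :
    freePoints (y + 1) hi {c ∈ C | y < c.1} = (freePoints lo hi C).filter (y < ·) := by
  ext p
  simp only [Finset.mem_filter, mem_freePoints, Covers, Set.mem_ofPred_eq]
  constructor
  · rintro ⟨h1, h2, h3⟩
    refine ⟨⟨by omega, h2, fun ⟨c, hc, hcp⟩ => h3 ⟨c, ⟨hc, ?_⟩, hcp⟩⟩, by omega⟩
    have := (hC.isBlock c hc).2.1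
    rcases hy c hc with h | h <;> omega
  · rintro ⟨⟨-, h2, h3⟩, h4⟩
    exact ⟨by omega, h2, fun ⟨c, hc, hcp⟩ => h3 ⟨c, hc.1, hcp⟩⟩

theorem not_dvd_of_not_covers (hC : IsMaximalFamily m lo hi C) {x y : ℕ} (hlo : lo ≤ x)
    (hxy : x < y) (hhi : y ≤ hi) (hx : ¬ Covers C x) (hy : ¬ Covers C y) :
    ¬ m ∣ y + 1 - x := fun hdvd => by
  refine hx ⟨(x, y), hC.maximal (x, y) ⟨hlo, hxy, hhi, hdvd⟩ fun c hc => ?_, le_rfl, hxy.le⟩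
  have := (hC.isBlock c hc).2.1
  have hcx : ¬ (c.1 ≤ x ∧ x ≤ c.2) := fun h => hx ⟨c, hc, h⟩
  have hcy : ¬ (c.1 ≤ y ∧ y ≤ c.2) := fun h => hy ⟨c, hc, h⟩
  unfold Compatible
  omega

theorem eq_or_inner_or_tail (hC : IsMaximalFamily m lo hi C) {b : ℕ} (hX : (lo, b) ∈ C)
    {c : ℕ × ℕ} (hc : c ∈ C) : c = (lo, b) ∨ (lo < c.1 ∧ c.2 < b) ∨ b < c.1 := by
  have := hC.isBlock c hc
  rcases hC.eq_or_compatible hc hX with h | h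
  · exact .inl h
  · unfold IsBlock Compatible at *
    dsimp only at h
    omega

theorem ncard_eq_of_mem (hC : IsMaximalFamily m lo hi C) {b : ℕ} (hX : (lo, b) ∈ C) :
    C.ncard = 1 + {c ∈ C | lo < c.1 ∧ c.2 < b}.ncard + {c ∈ C | b < c.1}.ncard := by
  have hsplit : C = insert (lo, b) ({c ∈ C | lo < c.1 ∧ c.2 < b} ∪ {c ∈ C | b < c.1}) := by
    ext c
    simp only [Set.mem_insert_iff, Set.mem_union, Set.mem_sep_iff]
    constructor
    · intro hc
      rcases hC.eq_or_inner_or_tail hX hc with h | h | h <;> simp [h, hc]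
    · rintro (rfl | ⟨hc, -⟩ | ⟨hc, -⟩) <;> assumption
  have hI : {c ∈ C | lo < c.1 ∧ c.2 < b}.Finite := hC.finite.subset fun c hc => hc.1
  have hT : {c ∈ C | b < c.1}.Finite := hC.finite.subset fun c hc => hc.1
  have hb := (hC.isBlock _ hX).2.1
  have hdisj : Disjoint {c ∈ C | lo < c.1 ∧ c.2 < b} {c ∈ C | b < c.1} := by
    rw [Set.disjoint_left]
    rintro c ⟨hc, -, h⟩ ⟨-, h'⟩
    have := (hC.isBlock c hc).2.1
    omega
  have hnotMem : (lo, b) ∉ {c ∈ C | lo < c.1 ∧ c.2 < b} ∪ {c ∈ C | b < c.1} := by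
    rintro (⟨-, h, -⟩ | ⟨-, h⟩) <;> dsimp only at h hb <;> omega
  conv_lhs => rw [hsplit]
  rw [Set.ncard_insert_of_notMem hnotMem (hI.union hT), Set.ncard_union_eq hdisj hI hT]
  ring

theorem not_straddle_of_mem (hC : IsMaximalFamily m lo hi C) {b : ℕ} (hX : (lo, b) ∈ C) :
    ∀ c ∈ C, c.2 ≤ b ∨ b < c.1 := fun c hc => by
  rcases hC.eq_or_inner_or_tail hX hc with rfl | h | h <;> omega

theorem freePoints_eq_of_mem (hC : IsMaximalFamily m lo hi C) {b : ℕ} (hX : (lo, b) ∈ C) :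
    freePoints lo hi C = freePoints (b + 1) hi {c ∈ C | b < c.1} := by
  rw [hC.freePoints_tail (hC.isBlock _ hX).2.1.le (hC.not_straddle_of_mem hX),
    Finset.filter_true_of_mem fun p hp => ?_]
  obtain ⟨hp1, -, hp3⟩ := mem_freePoints.1 hp
  by_contra hpb
  exact hp3 ⟨(lo, b), hX, hp1, not_lt.1 hpb⟩

theorem isTight_of_lt (hm : 0 < m) (hC : IsMaximalFamily m lo hi C) (hlt : hi < lo) :
    IsTight m lo hi C := by
  have hC0 : C = ∅ := Set.eq_empty_of_forall_notMem fun c hc => by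
    have := hC.isBlock c hc
    unfold IsBlock at this
    omega
  have hF0 : freePoints lo hi C = ∅ := Finset.eq_empty_of_forall_notMem fun p hp => by
    rw [mem_freePoints] at hp
    omega
  rw [IsTight, hF0, hC0, Set.ncard_empty, Finset.card_empty]
  omega

theorem isTight_of_mem (hm : 2 ≤ m) (hC : IsMaximalFamily m lo hi C) {b : ℕ}
    (hX : (lo, b) ∈ C)
    (hin : IsTight m (lo + 1) (b - 1) {c ∈ C | lo < c.1 ∧ c.2 < b})
    (htail : IsTight m (b + 1) hi {c ∈ C | b < c.1}) : IsTight m lo hi C := by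
  obtain ⟨-, hlt, hbhi, hdvd⟩ := hC.isBlock _ hX
  dsimp only at hlt hbhi hdvd
  obtain ⟨hin, hin'⟩ := hin
  obtain ⟨htail, htail'⟩ := htail
  -- the free points inside `(lo, b)` number `-2` modulo `m`, hence exactly `m - 2`
  have hinner : (freePoints (lo + 1) (b - 1) {c ∈ C | lo < c.1 ∧ c.2 < b}).card + 2 = m := by
    refine Nat.eq_of_dvd_of_lt_two_mul (by omega) ?_ (by omega)
    refine (Nat.dvd_add_right (dvd_mul_right m {c ∈ C | lo < c.1 ∧ c.2 < b}.ncard)).1 ?_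
    rwa [← add_assoc, hin, show b - 1 + 1 - (lo + 1) + 2 = b + 1 - lo by omega]
  rw [IsTight, hC.freePoints_eq_of_mem hX, hC.ncard_eq_of_mem hX, mul_add, mul_add, mul_one]
  omega

theorem isTight_of_not_covers (hm : 2 ≤ m) (hC : IsMaximalFamily m lo hi C) (hle : lo ≤ hi)
    (hlo : ¬ Covers C lo)
    (htail : ∀ y, lo ≤ y → (∀ c ∈ C, c.2 ≤ y ∨ y < c.1) →
      IsTight m (y + 1) hi {c ∈ C | y < c.1}) :
    IsTight m lo hi C := by
  have hgt : ∀ c ∈ C, lo < c.1 := fun c hc => by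
    obtain ⟨h1, h2, -⟩ := hC.isBlock c hc
    exact h1.lt_of_ne fun h => hlo ⟨c, hc, h.ge, h ▸ h2.le⟩
  obtain ⟨hcard, hlt⟩ := htail lo le_rfl fun c hc => .inr (hgt c hc)
  rw [Set.sep_eq_self_iff_mem_true.2 hgt] at hcard hlt
  rw [IsTight, freePoints_eq_insert hle hlo,
    Finset.card_insert_of_notMem fun h => (mem_freePoints.1 h).1.not_gt (lt_add_one lo)]
  refine ⟨by omega, ?_⟩
  by_contra! hge
  have hne : (freePoints (lo + 1) hi C).Nonempty := Finset.card_pos.1 (by omega)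
  set y := (freePoints (lo + 1) hi C).max' hne
  obtain ⟨hy1, hy2, hy3⟩ := mem_freePoints.1 (Finset.max'_mem _ hne)
  have hstr : ∀ c ∈ C, c.2 ≤ y ∨ y < c.1 := fun c hc => by
    have : ¬ (c.1 ≤ y ∧ y ≤ c.2) := fun h => hy3 ⟨c, hc, h⟩
    omega
  have htail_free : freePoints (y + 1) hi {c ∈ C | y < c.1} = ∅ := by
    rw [hC.freePoints_tail (by omega) hstr, Finset.filter_eq_empty_iff]
    intro p hp hyp
    obtain ⟨hp1, hp2, hp3⟩ := mem_freePoints.1 hp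
    have : p ≤ y := Finset.le_max' _ p (mem_freePoints.2 ⟨by omega, hp2, hp3⟩)
    omega
  obtain ⟨hy, -⟩ := htail y (by omega) hstr
  rw [htail_free, Finset.card_empty, add_zero] at hy
  -- `[lo, hi]` and the fully covered `[y + 1, hi]` both have length divisible by `m`
  refine hC.not_dvd_of_not_covers le_rfl (by omega) hy2 hlo hy3 ?_
  have hdvd := Nat.dvd_sub (Dvd.intro (C.ncard + 1) rfl) (Dvd.intro _ hy)
  rwa [show m * (C.ncard + 1) - (hi + 1 - (y + 1)) = y + 1 - lo by rw [mul_add]; omega] at hdvd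

theorem isTight (hm : 2 ≤ m) (hC : IsMaximalFamily m lo hi C) : IsTight m lo hi C := by
  induction h : hi + 1 - lo using Nat.strong_induction_on generalizing lo hi C with
  | _ L ih =>
  subst h
  rcases lt_or_ge hi lo with hlt | hle
  · exact hC.isTight_of_lt (by omega) hlt
  by_cases hlo : Covers C lo
  · obtain ⟨⟨a, b⟩, hX, ha, -⟩ := hlo
    obtain rfl : lo = a := le_antisymm (hC.isBlock _ hX).1 ha
    obtain ⟨-, hb, hbhi, -⟩ := hC.isBlock _ hX
    exact hC.isTight_of_mem hm hX (ih _ (by omega) (hC.inner hX) rfl)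
      (ih _ (by omega) (hC.tail hb.le (hC.not_straddle_of_mem hX)) rfl)
  · exact hC.isTight_of_not_covers hm hle hlo fun y hy hstr =>
      ih _ (by omega) (hC.tail hy hstr) rfl

theorem ncard_eq (hm : 2 ≤ m) (hC : IsMaximalFamily m lo hi C) :
    C.ncard = (hi + 1 - lo) / m := by
  obtain ⟨h1, h2⟩ := hC.isTight hm
  rw [← h1, Nat.mul_add_div (by omega), Nat.div_eq_of_lt h2, add_zero]

end IsMaximalFamily

theorem IsBrauer.insert {N d n : ℕ} {B : Set (Sym2 (ZMod N))} {X : Sym2 (ZMod N)}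
    (hB : IsBrauer d n B) (hX : IsDDiag d n X)
    (hdisj : ∀ Y ∈ B, Y ≠ X → DisjointDiag X Y ∧ DisjointDiag Y X) :
    IsBrauer d n (insert X B) := by
  refine ⟨fun Y hY => ?_, fun Y hY Z hZ hYZ => ?_⟩
  · rcases hY with rfl | hY
    exacts [hX, hB.1 Y hY]
  · rcases hY with rfl | hY <;> rcases hZ with rfl | hZ
    · exact absurd rfl hYZ
    · exact (hdisj Z hZ hYZ.symm).1
    · exact (hdisj Y hY hYZ).2
    · exact hB.2 Y hY Z hZ hYZ

section Polygon

variable {N : ℕ}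

def chord (N : ℕ) (c : ℕ × ℕ) : Sym2 (ZMod N) := s((c.1 : ZMod N), (c.2 : ZMod N))

theorem natCast_inj_of_lt {p q : ℕ} (hp : p < N) (hq : q < N) :
    (p : ZMod N) = q ↔ p = q := by
  rw [ZMod.natCast_eq_natCast_iff', Nat.mod_eq_of_lt hp, Nat.mod_eq_of_lt hq]

theorem val_natCast_sub_natCast {p q : ℕ} (hp : p < N) (hq : q < N) :
    ((q : ZMod N) - p).val = if p ≤ q then q - p else q + N - p := by
  split_ifs with h
  · rw [← Nat.cast_sub h, ZMod.val_natCast_of_lt (by omega)]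
  · rw [← ZMod.val_natCast_of_lt (show q + N - p < N by omega), Nat.cast_sub (by omega),
      Nat.cast_add, ZMod.natCast_self, add_zero]

theorem between_natCast_iff {a b x : ℕ} (ha : a < N) (hb : b < N) (hx : x < N) :
    Between (a : ZMod N) b x ↔
      0 < (if a ≤ x then x - a else x + N - a) ∧
        (if a ≤ x then x - a else x + N - a) < (if a ≤ b then b - a else b + N - a) := by
  rw [Between, val_natCast_sub_natCast ha hx, val_natCast_sub_natCast ha hb]

theorem crosses_chord_iff {p q p' q' : ℕ} (hp : p < q) (hq : q < N) (hp' : p' < q')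
    (hq' : q' < N) (h11 : p ≠ p') (h12 : p ≠ q') (h21 : q ≠ p') (h22 : q ≠ q') :
    Crosses (chord N (p, q)) (chord N (p', q')) ↔
      (p < p' ∧ p' < q ∧ q < q') ∨ (p' < p ∧ p < q' ∧ q' < q) := by
  constructor
  · rintro ⟨a, b, c, e, hX, hY, hxor⟩
    rw [chord, Sym2.eq_iff] at hX hY
    change (_ ∧ ¬ _) ∨ (_ ∧ ¬ _) at hxor
    rcases hX with ⟨rfl, rfl⟩ | ⟨rfl, rfl⟩ <;>
      rcases hY with ⟨rfl, rfl⟩ | ⟨rfl, rfl⟩ <;>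
      rw [between_natCast_iff, between_natCast_iff] at hxor <;>
      (try split_ifs at hxor) <;> omega
  · intro h
    refine ⟨p, q, p', q', rfl, rfl, ?_⟩
    change (_ ∧ ¬ _) ∨ (_ ∧ ¬ _)
    rw [between_natCast_iff (by omega) (by omega) (by omega),
      between_natCast_iff (by omega) (by omega) (by omega)]
    split_ifs <;> omega

theorem disjointDiag_chord_iff {c c' : ℕ × ℕ} (hc : c.1 < c.2) (hcN : c.2 < N)
    (hc' : c'.1 < c'.2) (hc'N : c'.2 < N) :
    DisjointDiag (chord N c) (chord N c') ↔ Compatible c c' := by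
  obtain ⟨p, q⟩ := c
  obtain ⟨p', q'⟩ := c'
  dsimp only at *
  have hdist : (∀ v : ZMod N, ¬ (v ∈ chord N (p, q) ∧ v ∈ chord N (p', q'))) ↔
      p ≠ p' ∧ p ≠ q' ∧ q ≠ p' ∧ q ≠ q' := by
    have hp : p < N := by omega
    have hp' : p' < N := by omega
    simp [chord, natCast_inj_of_lt, hp, hp', hcN, hc'N, and_assoc]
  rw [DisjointDiag, hdist, Compatible]
  constructor
  · rintro ⟨⟨h11, h12, h21, h22⟩, hcr⟩
    rw [crosses_chord_iff hc hcN hc' hc'N h11 h12 h21 h22] at hcr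
    dsimp only
    omega
  · intro h
    dsimp only at h
    obtain ⟨h11, h12, h21, h22⟩ : p ≠ p' ∧ p ≠ q' ∧ q ≠ p' ∧ q ≠ q' := by omega
    refine ⟨⟨h11, h12, h21, h22⟩, ?_⟩
    rw [crosses_chord_iff hc hcN hc' hc'N h11 h12 h21 h22]
    omega

theorem isDDiag_chord_iff {d n : ℕ} (hd : 1 ≤ d) (hn : 0 < n) (hN : N = (d + 1) * n + d - 1)
    {c : ℕ × ℕ} (hc : c.1 < c.2) (hcN : c.2 < N) :
    IsDDiag d n (chord N c) ↔ d + 1 ∣ c.2 + 1 - c.1 := by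
  obtain ⟨p, q⟩ := c
  dsimp only at *
  constructor
  · rintro ⟨i, j, hj, hX⟩
    obtain ⟨r, rfl⟩ : ∃ r, n = j + 1 + r := ⟨n - j - 1, by omega⟩
    have hn' : (d + 1) * (j + 1 + r) = (d + 1) * j + (d + 1) * r + (d + 1) := by ring
    rw [chord, Sym2.eq_iff] at hX
    dsimp only at hX
    rcases hX with ⟨rfl, hq⟩ | ⟨hp, rfl⟩
    · have hval := congrArg ZMod.val
        (show (q : ZMod N) - p = ↑(d + (d + 1) * j) by rw [hq]; ring)
      rw [val_natCast_sub_natCast (by omega) hcN, ZMod.val_natCast_of_lt (by omega)] at hval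
      exact Dvd.intro (j + 1) (by rw [mul_add, mul_one]; split_ifs at hval <;> omega)
    -- read from `q`, the diagonal spans the complementary arc, of length `N - (q - p)`
    · have hval := congrArg ZMod.val
        (show (p : ZMod N) - q = ↑(d + (d + 1) * j) by rw [hp]; ring)
      rw [val_natCast_sub_natCast hcN (by omega), ZMod.val_natCast_of_lt (by omega)] at hval
      exact Dvd.intro (r + 1) (by rw [mul_add, mul_one]; split_ifs at hval <;> omega)
  · rintro ⟨_ | j, he⟩
    · omega
    rw [mul_add, mul_one] at he
    have hjn : j + 1 ≤ n := by
      by_contra h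
      have := Nat.mul_le_mul_left (d + 1) (show n + 1 ≤ j + 1 by omega)
      rw [mul_add, mul_add, mul_one] at this
      omega
    refine ⟨p, j, by omega, ?_⟩
    rw [chord, show d + (d + 1) * j = q - p by omega,
      Nat.cast_sub hc.le, add_sub_cancel]

theorem chord_injOn : Set.InjOn (chord N) {c | c.1 < c.2 ∧ c.2 < N} := by
  rintro ⟨p, q⟩ ⟨hpq, hq⟩ ⟨p', q'⟩ ⟨hpq', hq'⟩ h
  dsimp only at *
  rw [chord, chord, Sym2.eq_iff, natCast_inj_of_lt, natCast_inj_of_lt, natCast_inj_of_lt,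
    natCast_inj_of_lt] at h <;> first | omega | (rcases h with ⟨rfl, rfl⟩ | h; rfl; omega)

theorem exists_chord_eq [NeZero N] {X : Sym2 (ZMod N)} (hX : ¬ X.IsDiag) :
    ∃ c : ℕ × ℕ, (c.1 < c.2 ∧ c.2 < N) ∧ chord N c = X := by
  induction X using Sym2.ind with
  | _ z w =>
  rw [Sym2.mk_isDiag_iff] at hX
  rcases Nat.lt_or_gt_of_ne fun h => hX (ZMod.val_injective N h) with h | h
  · exact ⟨(z.val, w.val), ⟨h, ZMod.val_lt w⟩, by simp [chord]⟩
  · exact ⟨(w.val, z.val), ⟨h, ZMod.val_lt z⟩, by simp [chord, Sym2.eq_swap]⟩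

theorem IsDDiag.not_isDiag {d n : ℕ} (hd : 1 ≤ d) (hn : 0 < n) (hN : N = (d + 1) * n + d - 1)
    {X : Sym2 (ZMod N)} (hX : IsDDiag d n X) : ¬ X.IsDiag := by
  obtain ⟨i, j, hj, rfl⟩ := hX
  have := Nat.mul_le_mul_left (d + 1) (show j + 1 ≤ n by omega)
  rw [mul_add, mul_one] at this
  rw [Sym2.mk_isDiag_iff, left_eq_add, ← Nat.cast_zero, natCast_inj_of_lt (by omega) (by omega)]
  omega

def endpointPairs (B : Set (Sym2 (ZMod N))) : Set (ℕ × ℕ) :=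
  {c | (c.1 < c.2 ∧ c.2 < N) ∧ chord N c ∈ B}

theorem image_chord_endpointPairs [NeZero N] {B : Set (Sym2 (ZMod N))}
    (hB : ∀ X ∈ B, ¬ X.IsDiag) : chord N '' endpointPairs B = B := by
  refine Set.Subset.antisymm (Set.image_subset_iff.2 fun c hc => hc.2) fun X hX => ?_
  obtain ⟨c, hc, rfl⟩ := exists_chord_eq (hB X hX)
  exact ⟨c, ⟨hc, hX⟩, rfl⟩

theorem ncard_endpointPairs [NeZero N] {B : Set (Sym2 (ZMod N))} (hB : ∀ X ∈ B, ¬ X.IsDiag) :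
    (endpointPairs B).ncard = B.ncard := by
  conv_rhs => rw [← image_chord_endpointPairs hB]
  exact (chord_injOn.mono fun c hc => hc.1).ncard_image.symm

theorem IsMaxBrauer.isMaximalFamily_endpointPairs [NeZero N] {d n : ℕ} (hd : 1 ≤ d)
    (hn : 0 < n) (hN : N = (d + 1) * n + d - 1) {B : Set (Sym2 (ZMod N))}
    (hB : IsMaxBrauer d n B) : IsMaximalFamily (d + 1) 0 (N - 1) (endpointPairs B) where
  isBlock c hc := ⟨Nat.zero_le _, hc.1.1, Nat.le_sub_one_of_lt hc.1.2,
    (isDDiag_chord_iff hd hn hN hc.1.1 hc.1.2).1 (hB.1.1 _ hc.2)⟩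
  pairwise c hc c' hc' hne := (disjointDiag_chord_iff hc.1.1 hc.1.2 hc'.1.1 hc'.1.2).1 <|
    hB.1.2 _ hc.2 _ hc'.2 fun h => hne (chord_injOn hc.1 hc'.1 h)
  maximal c hc hcomp := by
    obtain ⟨-, hc1, hc2, hdvd⟩ := hc
    have hcN : c.2 < N := by omega
    refine ⟨⟨hc1, hcN⟩, ?_⟩
    have hins : IsBrauer d n (insert (chord N c) B) := by
      refine hB.1.insert ((isDDiag_chord_iff hd hn hN hc1 hcN).2 hdvd) fun Y hY hYc => ?_
      rw [← image_chord_endpointPairs fun X hX => (hB.1.1 X hX).not_isDiag hd hn hN] at hY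
      obtain ⟨c', hc', rfl⟩ := hY
      have hcomp' := hcomp c' hc'
      exact ⟨(disjointDiag_chord_iff hc1 hcN hc'.1.1 hc'.1.2).2 hcomp',
        (disjointDiag_chord_iff hc'.1.1 hc'.1.2 hc1 hcN).2 hcomp'.symm⟩
    rw [← hB.2 _ hins (Set.subset_insert _ _)]
    exact Set.mem_insert _ _

end Polygon

/-- Every maximal `d`-Brauer relation on the `((d+1)n+d-1)`-gon has exactly `n` elements. -/
theorem maxBrauer_ncard {d n N : ℕ} (hd : 1 ≤ d) (hn : 0 < n)
    (hN : N = (d + 1) * n + d - 1) (B : Set (Sym2 (ZMod N)))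
    (hB : IsMaxBrauer d n B) : B.ncard = n := by
  have hdn : d + 1 ≤ (d + 1) * n := Nat.le_mul_of_pos_right _ hn
  have : NeZero N := ⟨by omega⟩
  rw [← ncard_endpointPairs fun X hX => (hB.1.1 X hX).not_isDiag hd hn hN,
    (hB.isMaximalFamily_endpointPairs hd hn hN).ncard_eq (by omega),
    show N - 1 + 1 - 0 = (d + 1) * n + (d - 1) by omega, Nat.mul_add_div (by omega),
    Nat.div_eq_of_lt (by omega), add_zero]

end BrauerComb
end

section
/- Let Π be an N-gon with N = (d+1)n + d - 1, and let V be a set of n vertices of Π. Then for every v ∈ V there exists an integer a with 0 ≤ a ≤ n-1 such that the number of elements of V lying strictly between v and v + d + (d+1)a (in clockwise order) equals a, and v + d + (d+1)a ∉ V. -/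
theorem Monotone.exists_apply_eq_self_and_apply_succ_eq_self {c : ℕ → ℕ} (hc : Monotone c)
    {m : ℕ} (hm : ∀ b, c b ≤ m) : ∃ a, c a = a ∧ c (a + 1) = a := by
  classical
  have hex : ∃ b, c (b + 1) ≤ b := ⟨m, hm _⟩
  refine ⟨Nat.find hex, ?_⟩
  have hsucc : c (Nat.find hex + 1) ≤ Nat.find hex := Nat.find_spec hex
  have hself : Nat.find hex ≤ c (Nat.find hex) := by
    rcases h : Nat.find hex with _ | b
    · exact Nat.zero_le _
    · have := Nat.find_min hex (h ▸ Nat.lt_succ_self b : b < Nat.find hex)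
      omega
  have := hc (Nat.le_add_right (Nat.find hex) 1)
  omega

namespace BrauerComb

open Finset

section ArcCard

variable {N : ℕ} (V : Finset (ZMod N)) (v : ZMod N)

def arcCard (k : ℕ) : ℕ :=
  #{x ∈ V | 0 < (x - v).val ∧ (x - v).val < k}

theorem arcCard_mono : Monotone (arcCard V v) := fun _ _ hkl =>
  card_le_card fun _ hx => by
    obtain ⟨hxV, hpos, hlt⟩ := mem_filter.mp hx
    exact mem_filter.mpr ⟨hxV, hpos, hlt.trans_le hkl⟩

theorem arcCard_lt_card (hv : v ∈ V) (k : ℕ) : arcCard V v k < #V :=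
  card_lt_card <| (ssubset_iff_of_subset (filter_subset _ V)).mpr ⟨v, hv, by simp⟩

theorem arcCard_lt_arcCard {x : ZMod N} (hx : x ∈ V) {k l : ℕ} (hk₀ : 0 < k)
    (hk : k ≤ (x - v).val) (hl : (x - v).val < l) : arcCard V v k < arcCard V v l := by
  refine card_lt_card <| (ssubset_iff_of_subset ?_).mpr ⟨x, ?_, ?_⟩
  · intro y hy
    simp only [mem_filter] at hy ⊢
    exact ⟨hy.1, hy.2.1, by omega⟩
  · exact mem_filter.mpr ⟨hx, by omega⟩
  · simp only [mem_filter]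
    omega

theorem val_add_natCast_sub {k : ℕ} (hk : k < N) : (v + (k : ZMod N) - v).val = k := by
  rw [add_sub_cancel_left, ZMod.val_natCast, Nat.mod_eq_of_lt hk]

theorem ncard_between_eq_arcCard {k : ℕ} (hk : k < N) :
    {x : ZMod N | x ∈ V ∧ Between v (v + (k : ZMod N)) x}.ncard = arcCard V v k := by
  rw [arcCard, ← Set.ncard_coe_finset, coe_filter]
  simp only [Between, val_add_natCast_sub v hk]

end ArcCard

theorem exists_good_diagonal_general {d n N : ℕ} (hd : 1 ≤ d)
    (hN : N = (d + 1) * n + d - 1) (V : Finset (ZMod N)) (hV : V.card = n) :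
    ∀ v ∈ V, ∃ a : ℕ, a ≤ n - 1 ∧
      {x : ZMod N | x ∈ V ∧ Between v (v + ((d + (d + 1) * a : ℕ) : ZMod N)) x}.ncard = a ∧
      (v + ((d + (d + 1) * a : ℕ) : ZMod N)) ∉ V := by
  intro v hv
  have hlen : Monotone fun a : ℕ => d + (d + 1) * a := fun _ _ h =>
    Nat.add_le_add_left (Nat.mul_le_mul_left _ h) _
  obtain ⟨a, ha, ha_succ⟩ :=
    ((arcCard_mono V v).comp hlen).exists_apply_eq_self_and_apply_succ_eq_self
      (fun b => (arcCard_lt_card V v hv (d + (d + 1) * b)).le)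
  simp only [Function.comp_apply] at ha ha_succ
  have han : a < n := hV ▸ ha ▸ arcCard_lt_card V v hv _
  have hlt : d + (d + 1) * a < N := by
    have : (d + 1) * (a + 1) ≤ (d + 1) * n := Nat.mul_le_mul_left _ han
    rw [mul_add_one] at this
    omega
  have hval := val_add_natCast_sub v hlt
  refine ⟨a, by omega, (ncard_between_eq_arcCard V v hlt).trans ha, fun hw => ?_⟩
  have := arcCard_lt_arcCard V v hw (by omega) hval.ge
    (show _ < d + (d + 1) * (a + 1) by rw [hval, mul_add_one]; omega)
  omega

/-- For an `n`-element vertex set `V` of the `((d+1)n+d-1)`-gon and any `v ∈ V`,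
there is `0 ≤ a ≤ n-1` such that exactly `a` elements of `V` lie strictly
(clockwise) between `v` and `v + d + (d+1)a`, and `v + d + (d+1)a ∉ V`. -/
theorem exists_good_diagonal {d n N : ℕ} (hd : 1 ≤ d) (hn : 0 < n)
    (hN : N = (d + 1) * n + d - 1) (V : Finset (ZMod N)) (hV : V.card = n) :
    ∀ v ∈ V, ∃ a : ℕ, a ≤ n - 1 ∧
      {x : ZMod N | x ∈ V ∧ Between v (v + ((d + (d + 1) * a : ℕ) : ZMod N)) x}.ncard = a ∧
      (v + ((d + (d + 1) * a : ℕ) : ZMod N)) ∉ V :=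
  exists_good_diagonal_general hd hN V hV

end BrauerComb
end

section
/- Let T be a k-linear Hom-finite Krull–Schmidt triangulated category with Serre functor S, and let C be a (-d)-Calabi–Yau configuration in T (d ≥ 1). Then S(C)[d] = C, i.e. the set C is stable under the autoequivalence S∘[d]. -/
/-!
A nonzero map `f : Y ⟶ (S X)⟦d⟧` with `X, Y ∈ C` is an isomorphism. Otherwise its cone is
nonzero, so by Hom-finiteness it has an indecomposable retract, which `C` detects through a
nonzero map `X' ⟶ cone⟦-(j + 1)⟧`. In the triangle `f⟦-(j + 1)⟧` this map dies on
`Y⟦-j⟧`, since nonzero maps from `C` to `Y⟦-j⟧` are isomorphisms and `f ≠ 0`; so it comes from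
`(S X)⟦d - j - 1⟧`. Serre duality `Hom(X', (S X)⟦m⟧) ≅ D Hom(X, X'⟦-m⟧)` and the vanishing
conditions leave only `m = 0`, `X' = X`, where `Hom(X, S X)` is one-dimensional and spanned by a
map factoring through `f⟦-d⟧`, so the map into the cone vanishes after all.

Both inclusions follow: `C` detects the indecomposables `(S X)⟦d⟧` and `Y⟦-1⟧`, and the same
vanishing conditions force the detecting map to be a nonzero map `Y ⟶ (S X)⟦d⟧`.
-/

open CategoryTheory Limits

universe v u w

namespace CYConfig

open scoped Classical

/-- An object of an additive category is indecomposable. -/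
def Indec {T : Type v} [Category.{w} T] [Preadditive T] [HasBinaryBiproducts T]
    (X : T) : Prop :=
  ¬ IsZero X ∧ ∀ (Y Z : T), (X ≅ Y ⊞ Z) → IsZero Y ∨ IsZero Z

/-- A `(-d)`-Calabi–Yau configuration: a set `C` of indecomposable objects such that
(1) `dim Hom(X,Y) = δ_{X,Y}` for `X, Y ∈ C`; (2) `Hom(X, Y[-j]) = 0` for `X, Y ∈ C`
and `0 < j ≤ d-1`; (3) every indecomposable `M` admits some `X ∈ C`, `0 ≤ j ≤ d-1`
with `Hom(X, M[-j]) ≠ 0`. -/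
structure IsCYConfig {k : Type u} [Field k] (T : Type v) [Category.{w} T]
    [Preadditive T] [Linear k T] [HasBinaryBiproducts T] [HasShift T ℤ]
    (d : ℕ) (C : Set T) : Prop where
  indec : ∀ X ∈ C, Indec X
  hom_dim : ∀ X ∈ C, ∀ Y ∈ C,
    Module.finrank k (X ⟶ Y) = if X = Y then 1 else 0
  neg_vanish : ∀ X ∈ C, ∀ Y ∈ C, ∀ j : ℤ, 0 < j → j ≤ (d : ℤ) - 1 →
    ∀ f : X ⟶ Y⟦-j⟧, f = 0
  detects : ∀ M : T, Indec M → ∃ X ∈ C, ∃ j : ℤ, 0 ≤ j ∧ j ≤ (d : ℤ) - 1 ∧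
    ∃ f : X ⟶ M⟦-j⟧, f ≠ 0

section Preliminaries

variable {T : Type v} [Category.{w} T]

lemma nontrivial_hom_shift_iff [HasShift T ℤ] (A B : T) (n : ℤ) :
    Nontrivial (A ⟶ B⟦n⟧) ↔ Nontrivial (A⟦-n⟧ ⟶ B) :=
  ((shiftEquiv' T (-n) n (neg_add_cancel n)).toAdjunction.homEquiv A B).nontrivial_congr.symm

lemma nontrivial_hom_congr_right {A B B' : T} (e : B ≅ B') :
    Nontrivial (A ⟶ B) ↔ Nontrivial (A ⟶ B') :=
  ((Iso.refl A).homCongr e).nontrivial_congr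

variable {k : Type u} [Field k] [Preadditive T] [Linear k T]

lemma isIso_of_ne_zero_of_finrank_end_eq_one {Y : T} (h : Module.finrank k (Y ⟶ Y) = 1)
    {s : Y ⟶ Y} (hs : s ≠ 0) : IsIso s := by
  have hid : 𝟙 Y ≠ 0 := fun h0 => hs (by rw [← Category.comp_id s, h0, comp_zero])
  obtain ⟨a, rfl⟩ := (finrank_eq_one_iff_of_nonzero' _ hid).mp h s
  have ha : a ≠ 0 := by rintro rfl; exact hs (zero_smul k _)
  exact ⟨a⁻¹ • 𝟙 Y, by simp [smul_smul, ha], by simp [smul_smul, ha]⟩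

lemma comp_eq_zero_of_finrank_eq_one {X P Q R : T} (hQ : Module.finrank k (X ⟶ Q) = 1)
    {t : P ⟶ Q} {g : Q ⟶ R} (htg : t ≫ g = 0) {b : X ⟶ P} (hb : b ≫ t ≠ 0) (c : X ⟶ Q) :
    c ≫ g = 0 := by
  obtain ⟨a, rfl⟩ := (finrank_eq_one_iff_of_nonzero' _ hb).mp hQ c
  simp [htg]

end Preliminaries

section Serre

variable {k : Type u} [Field k] {T : Type v} [Category.{w} T] [Preadditive T] [Linear k T]
  {S : T ⥤ T}

lemma nontrivial_hom_serre_iff (η : ∀ X Y : T, (X ⟶ Y) ≃ₗ[k] Module.Dual k (Y ⟶ S.obj X))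
    (X U : T) : Nontrivial (U ⟶ S.obj X) ↔ Nontrivial (X ⟶ U) := by
  rw [(η X U).toEquiv.nontrivial_congr, Module.nontrivial_dual_iff]

lemma finrank_hom_serre (η : ∀ X Y : T, (X ⟶ Y) ≃ₗ[k] Module.Dual k (Y ⟶ S.obj X))
    (X U : T) : Module.finrank k (U ⟶ S.obj X) = Module.finrank k (X ⟶ U) :=
  ((η X U).finrank_eq.trans Subspace.dual_finrank_eq).symm

lemma exists_comp_ne_zero_of_serre
    (η : ∀ X Y : T, (X ⟶ Y) ≃ₗ[k] Module.Dual k (Y ⟶ S.obj X))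
    (hη : ∀ (X Y Z : T) (u : X ⟶ Y) (v : Y ⟶ Z) (w : Z ⟶ S.obj X),
      η X Z (u ≫ v) w = η X Y u (v ≫ w))
    {X U : T} {t : U ⟶ S.obj X} (ht : t ≠ 0) : ∃ b : X ⟶ U, b ≫ t ≠ 0 := by
  obtain ⟨φ, hφ⟩ := Module.Projective.exists_dual_ne_zero k ht
  refine ⟨(η X U).symm φ, fun h => hφ ?_⟩
  simpa [h] using (hη X U _ ((η X U).symm φ) t (𝟙 _)).symm

end Serre

section Indecomposable

variable {T : Type v} [Category.{w} T] [Preadditive T] [HasBinaryBiproducts T]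

lemma Indec.obj_of_isEquivalence {D : Type*} [Category D] [Preadditive D]
    [HasBinaryBiproducts D] (F : T ⥤ D) [F.IsEquivalence] {X : T} (hX : Indec X) :
    Indec (F.obj X) := by
  have := preservesBinaryBiproducts_of_preservesBinaryProducts F.inv
  refine ⟨fun h => hX.1 ((F.inv.map_isZero h).of_iso (F.asEquivalence.unitIso.app X)),
    fun A B e => ?_⟩
  refine (hX.2 _ _ (F.asEquivalence.unitIso.app X ≪≫ F.inv.mapIso e ≪≫
    F.inv.mapBiprod A B)).imp ?_ ?_ <;>
  exact fun h => (F.map_isZero h).of_iso (F.asEquivalence.counitIso.app _).symm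

variable {k : Type u} [Field k] [Linear k T]

lemma finrank_end_lt_of_iso_biprod [∀ X Y : T, Module.Finite k (X ⟶ Y)] {Z A B : T}
    (e : Z ≅ A ⊞ B) (hB : ¬IsZero B) :
    Module.finrank k (A ⟶ A) < Module.finrank k (Z ⟶ Z) := by
  let π : (A ⊞ B ⟶ A ⊞ B) →ₗ[k] (A ⟶ A) × (B ⟶ B) :=
    (Linear.rightComp k A biprod.fst ∘ₗ Linear.leftComp k _ biprod.inl).prod
      (Linear.rightComp k B biprod.snd ∘ₗ Linear.leftComp k _ biprod.inr)
  have hπ : Function.Surjective π := fun p => ⟨biprod.map p.1 p.2, by simp [π]⟩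
  have hB' : 0 < Module.finrank k (B ⟶ B) :=
    Module.finrank_pos_iff.mpr ⟨𝟙 B, 0, fun h => hB ((IsZero.iff_id_eq_zero B).mpr h)⟩
  have := LinearMap.finrank_le_finrank_of_surjective hπ
  rw [Module.finrank_prod, ← (Linear.homCongr k e e).finrank_eq] at this
  omega

lemma exists_indec_retract [∀ X Y : T, Module.Finite k (X ⟶ Y)] (Z : T) (hZ : ¬IsZero Z) :
    ∃ N : T, Indec N ∧ Nonempty (Retract N Z) := by
  induction hn : Module.finrank k (Z ⟶ Z) using Nat.strong_induction_on generalizing Z with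
  | _ n ih =>
  by_cases hZi : Indec Z
  · exact ⟨Z, hZi, ⟨Retract.refl Z⟩⟩
  obtain ⟨A, B, e, hA, hB⟩ : ∃ A B, ∃ _ : Z ≅ A ⊞ B, ¬IsZero A ∧ ¬IsZero B := by
    simpa [Indec, hZ] using hZi
  obtain ⟨N, hN, ⟨r⟩⟩ := ih _ (hn ▸ finrank_end_lt_of_iso_biprod e hB) A hA rfl
  exact ⟨N, hN, ⟨r.trans ⟨biprod.inl ≫ e.inv, e.hom ≫ biprod.fst, by simp⟩⟩⟩

end Indecomposable

namespace IsCYConfig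

variable {k : Type u} [Field k] {T : Type v} [Category.{w} T] [Preadditive T] [Linear k T]
  [HasBinaryBiproducts T] [HasShift T ℤ] {d : ℕ} {C : Set T}

lemma finrank_hom_self (hC : IsCYConfig (k := k) T d C) {X : T} (hX : X ∈ C) :
    Module.finrank k (X ⟶ X) = 1 := by
  simpa using hC.hom_dim X hX X hX

variable [∀ X Y : T, Module.Finite k (X ⟶ Y)]

lemma eq_of_nontrivial_hom (hC : IsCYConfig (k := k) T d C) {X Y : T} (hX : X ∈ C) (hY : Y ∈ C)
    [Nontrivial (X ⟶ Y)] : X = Y := by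
  by_contra h
  have := hC.hom_dim X hX Y hY
  rw [if_neg h] at this
  exact (Module.finrank_pos (R := k)).ne' this

lemma eq_zero_and_eq_of_nontrivial_hom_shift (hC : IsCYConfig (k := k) T d C) {X Y : T}
    (hX : X ∈ C) (hY : Y ∈ C) {j : ℤ} (hj0 : 0 ≤ j) (hj1 : j ≤ d - 1)
    (h : Nontrivial (X ⟶ Y⟦-j⟧)) : j = 0 ∧ X = Y := by
  obtain rfl : j = 0 := by
    by_contra hj
    obtain ⟨f, hf⟩ := exists_ne (0 : X ⟶ Y⟦-j⟧)
    exact hf (hC.neg_vanish X hX Y hY j (by omega) hj1 f)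
  have : Nontrivial (X ⟶ Y) :=
    (nontrivial_hom_congr_right ((shiftFunctorZero' T (-0 : ℤ) neg_zero).app Y)).mp h
  exact ⟨rfl, hC.eq_of_nontrivial_hom hX hY⟩

lemma eq_zero_and_eq_of_nontrivial_hom_serre_shift (hC : IsCYConfig (k := k) T d C)
    {S : T ⥤ T} (η : ∀ X Y : T, (X ⟶ Y) ≃ₗ[k] Module.Dual k (Y ⟶ S.obj X))
    {X Y : T} (hX : X ∈ C) (hY : Y ∈ C) {m : ℤ} (hm0 : 0 ≤ m) (hm1 : m ≤ d - 1)
    (h : Nontrivial (Y ⟶ (S.obj X)⟦m⟧)) : m = 0 ∧ X = Y := by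
  rw [nontrivial_hom_shift_iff, nontrivial_hom_serre_iff η] at h
  exact hC.eq_zero_and_eq_of_nontrivial_hom_shift hX hY hm0 hm1 h

lemma exists_nontrivial_hom_shift (hC : IsCYConfig (k := k) T d C) {Z : T} (hZ : ¬IsZero Z) :
    ∃ X ∈ C, ∃ j : ℤ, 0 ≤ j ∧ j ≤ d - 1 ∧ Nontrivial (X ⟶ Z⟦-j⟧) := by
  obtain ⟨N, hN, ⟨r⟩⟩ := exists_indec_retract (k := k) Z hZ
  obtain ⟨X, hX, j, hj0, hj1, u, hu⟩ := hC.detects N hN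
  refine ⟨X, hX, j, hj0, hj1, u ≫ (shiftFunctor T (-j)).map r.i, 0, fun h => hu ?_⟩
  simpa [← Functor.map_comp] using h =≫ (shiftFunctor T (-j)).map r.r

/-- A nonzero `c` forces `m = 0` and `X' = X`; then `Hom(X, Q) ≅ Hom(X, S X)` is a line, and by
Serre duality it is spanned by a map factoring through `t`. -/
lemma comp_eq_zero_of_iso_serre_shift (hC : IsCYConfig (k := k) T d C) {S : T ⥤ T}
    (η : ∀ X Y : T, (X ⟶ Y) ≃ₗ[k] Module.Dual k (Y ⟶ S.obj X))
    (hη : ∀ (X Y Z : T) (u : X ⟶ Y) (v : Y ⟶ Z) (w : Z ⟶ S.obj X),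
      η X Z (u ≫ v) w = η X Y u (v ≫ w))
    {X X' P Q R : T} (hX : X ∈ C) (hX' : X' ∈ C) {m : ℤ} (hm0 : 0 ≤ m) (hm1 : m ≤ d - 1)
    (e : Q ≅ (S.obj X)⟦m⟧) {t : P ⟶ Q} {g : Q ⟶ R} (ht : t ≠ 0) (htg : t ≫ g = 0)
    (c : X' ⟶ Q) : c ≫ g = 0 := by
  by_cases hc : c = 0
  · simp [hc]
  obtain ⟨rfl, rfl⟩ := hC.eq_zero_and_eq_of_nontrivial_hom_serre_shift η hX hX' hm0 hm1
    ((nontrivial_hom_congr_right e).mp ⟨c, 0, hc⟩)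
  let e₀ : Q ≅ S.obj X := e ≪≫ (shiftFunctorZero T ℤ).app _
  obtain ⟨b, hb⟩ := exists_comp_ne_zero_of_serre η hη (t := t ≫ e₀.hom) (by simpa using ht)
  refine comp_eq_zero_of_finrank_eq_one (k := k) ?_ htg (b := b)
    (fun h => hb (by simp [reassoc_of% h])) c
  rw [(Linear.homCongr k (Iso.refl X) e₀).finrank_eq, finrank_hom_serre η, hC.finrank_hom_self hX]

open Pretriangulated

variable [HasZeroObject T] [∀ n : ℤ, (shiftFunctor T n).Additive] [Pretriangulated T]

lemma isIso_of_ne_zero (hC : IsCYConfig (k := k) T d C) {S : T ⥤ T}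
    (η : ∀ X Y : T, (X ⟶ Y) ≃ₗ[k] Module.Dual k (Y ⟶ S.obj X))
    (hη : ∀ (X Y Z : T) (u : X ⟶ Y) (v : Y ⟶ Z) (w : Z ⟶ S.obj X),
      η X Z (u ≫ v) w = η X Y u (v ≫ w))
    {X Y : T} (hX : X ∈ C) (hY : Y ∈ C) {f : Y ⟶ (S.obj X)⟦(d : ℤ)⟧} (hf : f ≠ 0) :
    IsIso f := by
  obtain ⟨Z, g, h, hΔ⟩ := distinguished_cocone_triangle f
  refine (Triangle.isZero₃_iff_isIso₁ _ hΔ).mp (by_contra fun hZ => ?_)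
  have hZ' : ¬IsZero (Z⟦(-1 : ℤ)⟧) := fun h => hZ <| ((shiftFunctor T 1).map_isZero h).of_iso
    ((shiftFunctorCompIsoId T (-1) 1 (by simp)).app Z).symm
  obtain ⟨X', hX', j, hj0, hj1, hne⟩ := hC.exists_nontrivial_hom_shift hZ'
  let Θ := (Triangle.shiftFunctor T (-(j + 1))).obj (Triangle.mk f g h)
  have hΘ : Θ ∈ distTriang T := Triangle.shift_distinguished _ hΔ _
  have hΘ₁ : Θ.mor₁ ≠ 0 := by
    change (-(j + 1)).negOnePow • f⟦-(j + 1)⟧' ≠ 0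
    rwa [Ne, smul_eq_zero_iff_eq, Functor.map_eq_zero_iff]
  have : Nontrivial (X' ⟶ Θ.obj₃) := (nontrivial_hom_congr_right
    ((shiftFunctorAdd' T (-1) (-j) (-(j + 1)) (by ring)).symm.app Z)).mp hne
  obtain ⟨u, hu⟩ := exists_ne (0 : X' ⟶ Θ.obj₃)
  -- Otherwise `u ≫ Θ.mor₃` is a nonzero map from `C` into `Y⟦-j⟧`, hence an isomorphism,
  -- and then `Θ.mor₃ ≫ Θ.mor₁⟦1⟧' = 0` kills `Θ.mor₁`.
  have hu₃ : u ≫ Θ.mor₃ = 0 := by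
    by_contra hne₃
    let ι : Θ.obj₁⟦(1 : ℤ)⟧ ≅ Y⟦-j⟧ :=
      (shiftFunctorAdd' T (-(j + 1)) 1 (-j) (by ring)).symm.app Y
    obtain ⟨rfl, rfl⟩ := hC.eq_zero_and_eq_of_nontrivial_hom_shift hX' hY hj0 hj1
      ⟨(u ≫ Θ.mor₃) ≫ ι.hom, 0, by rwa [Ne, Preadditive.IsIso.comp_right_eq_zero]⟩
    let ι₀ : Θ.obj₁⟦(1 : ℤ)⟧ ≅ X' := (shiftFunctorCompIsoId T (-(0 + 1)) 1 (by ring)).app X'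
    have : IsIso ((u ≫ Θ.mor₃) ≫ ι₀.hom) := isIso_of_ne_zero_of_finrank_end_eq_one
      (hC.finrank_hom_self hX') (by rwa [Ne, Preadditive.IsIso.comp_right_eq_zero])
    have : IsIso (u ≫ Θ.mor₃) := IsIso.of_isIso_comp_right (u ≫ Θ.mor₃) ι₀.hom
    apply hΘ₁
    rw [← (shiftFunctor T (1 : ℤ)).map_eq_zero_iff, ← cancel_epi (u ≫ Θ.mor₃), comp_zero,
      Category.assoc, comp_distTriang_mor_zero₃₁ Θ hΘ, comp_zero]
  obtain ⟨c, rfl⟩ := Triangle.coyoneda_exact₃ Θ hΘ u hu₃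
  exact hu (hC.comp_eq_zero_of_iso_serre_shift η hη hX hX' (m := (d : ℤ) - (j + 1))
    (by omega) (by omega) ((shiftFunctorAdd' T (d : ℤ) (-(j + 1)) _ (by ring)).symm.app _)
    hΘ₁ (comp_distTriang_mor_zero₁₂ Θ hΘ) c)

lemma nonempty_iso_of_nontrivial (hC : IsCYConfig (k := k) T d C) {S : T ⥤ T}
    (η : ∀ X Y : T, (X ⟶ Y) ≃ₗ[k] Module.Dual k (Y ⟶ S.obj X))
    (hη : ∀ (X Y Z : T) (u : X ⟶ Y) (v : Y ⟶ Z) (w : Z ⟶ S.obj X),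
      η X Z (u ≫ v) w = η X Y u (v ≫ w))
    {X Y : T} (hX : X ∈ C) (hY : Y ∈ C) (h : Nontrivial (Y ⟶ (S.obj X)⟦(d : ℤ)⟧)) :
    Nonempty ((S.obj X)⟦(d : ℤ)⟧ ≅ Y) := by
  obtain ⟨f, hf⟩ := exists_ne (0 : Y ⟶ (S.obj X)⟦(d : ℤ)⟧)
  have := hC.isIso_of_ne_zero η hη hX hY hf
  exact ⟨(asIso f).symm⟩

end IsCYConfig

/-- Theorem (CY-configurations are `S[d]`-stable):  if `T` is a `k`-linear Hom-finite
Krull–Schmidt triangulated category (Krull–Schmidt being guaranteed by Hom-finiteness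
over the field `k` together with idempotent completeness) with Serre functor `S`, and
`C` is a `(-d)`-CY configuration in `T` (`d ≥ 1`), then `S(C)[d] = C` (as a class of
objects closed under isomorphism). -/
theorem cyConfig_serre_shift_stable {k : Type u} [Field k]
    {T : Type v} [Category.{w} T] [Preadditive T] [Linear k T]
    [HasShift T ℤ] [HasZeroObject T] [∀ n : ℤ, (shiftFunctor T n).Additive]
    [Pretriangulated T] [IsTriangulated T]
    [HasBinaryBiproducts T] [IsIdempotentComplete T]
    [homFin : ∀ X Y : T, Module.Finite k (X ⟶ Y)]
    (S : T ⥤ T) [S.IsEquivalence]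
    (η : ∀ X Y : T, (X ⟶ Y) ≃ₗ[k] Module.Dual k (Y ⟶ S.obj X))
    (hη₁ : ∀ (X Y Z : T) (u : X ⟶ Y) (v : Y ⟶ Z) (w : Z ⟶ S.obj X),
      η X Z (u ≫ v) w = η X Y u (v ≫ w))
    (hη₂ : ∀ (X' X Y : T) (a : X' ⟶ X) (u : X ⟶ Y) (w : Y ⟶ S.obj X'),
      η X' Y (a ≫ u) w = η X Y u (w ≫ S.map a))
    (d : ℕ) (hd : 1 ≤ d) (C : Set T) (hC : IsCYConfig (k := k) T d C) :
    (∀ X ∈ C, ∃ Y ∈ C, Nonempty ((S.obj X)⟦(d : ℤ)⟧ ≅ Y)) ∧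
    (∀ Y ∈ C, ∃ X ∈ C, Nonempty ((S.obj X)⟦(d : ℤ)⟧ ≅ Y)) := by
  constructor
  · intro X hX
    obtain ⟨Y, hY, j, hj0, hj1, u, hu⟩ := hC.detects _ <|
      ((hC.indec X hX).obj_of_isEquivalence S).obj_of_isEquivalence (shiftFunctor T (d : ℤ))
    obtain rfl : j = 0 := by
      by_contra hj
      have hne := (nontrivial_hom_congr_right
        ((shiftFunctorAdd' T (d : ℤ) (-j) ((d : ℤ) - j) (by ring)).symm.app _)).mp ⟨u, 0, hu⟩
      have := (hC.eq_zero_and_eq_of_nontrivial_hom_serre_shift η hX hY (by omega) (by omega) hne).1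
      omega
    exact ⟨Y, hY, hC.nonempty_iso_of_nontrivial η hη₁ hX hY ((nontrivial_hom_congr_right
      ((shiftFunctorZero' T (-0 : ℤ) neg_zero).app _)).mp ⟨u, 0, hu⟩)⟩
  · intro Y hY
    obtain ⟨X, hX, j, hj0, hj1, u, hu⟩ :=
      hC.detects _ ((hC.indec Y hY).obj_of_isEquivalence (shiftFunctor T (-1)))
    have hne := (nontrivial_hom_congr_right
      ((shiftFunctorAdd' T (-1) (-j) (-(j + 1)) (by ring)).symm.app Y)).mp ⟨u, 0, hu⟩
    have hjd : j + 1 = d := by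
      by_contra hjd
      have := (hC.eq_zero_and_eq_of_nontrivial_hom_shift hX hY (by omega) (by omega) hne).1
      omega
    rw [hjd, ← nontrivial_hom_serre_iff η, ← nontrivial_hom_shift_iff] at hne
    exact ⟨X, hX, hC.nonempty_iso_of_nontrivial η hη₁ hX hY hne⟩

end CYConfig
end

section
/- Let T be a k-linear Hom-finite triangulated category with Serre functor S, let X ∈ T with End(X) = k, and let f ∈ Hom(X, S X). Then for any Y and any g ∈ Hom(S X, Y) that is not a split monomorphism, the composite g∘f = 0. -/
/-!
A nonzero composite `f ≫ g` pairs nontrivially, under Serre duality, with some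
`w : Y ⟶ S X`, so `g ≫ w ≠ 0`. Since `S` is fully faithful, `End (S X) ≅ End X = k`, so every
nonzero endomorphism of `S X` is invertible; hence `g ≫ w` is an isomorphism and `g` is a
split monomorphism.
-/

open CategoryTheory Limits

universe v u w

lemma isIso_or_eq_zero_of_forall_eq_smul_id {k : Type*} [DivisionRing k] {C : Type*}
    [Category C] [Preadditive C] [Linear k C] {X : C}
    (hX : ∀ e : X ⟶ X, ∃ c : k, e = c • 𝟙 X) (e : X ⟶ X) : IsIso e ∨ e = 0 := by
  obtain ⟨c, rfl⟩ := hX e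
  rcases eq_or_ne c 0 with rfl | hc
  · exact Or.inr (zero_smul k _)
  · exact Or.inl ⟨c⁻¹ • 𝟙 X, by simp [smul_smul, hc], by simp [smul_smul, hc]⟩

lemma CategoryTheory.Functor.isIso_or_eq_zero_of_full {C D : Type*} [Category C] [Category D]
    [HasZeroMorphisms C] [HasZeroMorphisms D] (F : C ⥤ D) [F.Full] {X : C}
    (hX : ∀ e : X ⟶ X, IsIso e ∨ e = 0) (e : F.obj X ⟶ F.obj X) : IsIso e ∨ e = 0 := by
  rw [← F.map_preimage e]
  rcases hX (F.preimage e) with h | h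
  · exact Or.inl inferInstance
  · exact Or.inr (by rw [h, F.map_zero])

lemma isSplitMono_of_isIso_comp {C : Type*} [Category C] {X Y Z : C} (g : X ⟶ Y) (w : Y ⟶ Z)
    [IsIso (g ≫ w)] : IsSplitMono g :=
  IsSplitMono.mk' ⟨w ≫ inv (g ≫ w), by rw [← Category.assoc, IsIso.hom_inv_id]⟩

lemma exists_comp_ne_zero_of_serreDuality {k : Type*} [CommRing k] {C : Type*} [Category C]
    [Preadditive C] [Linear k C] {S : C ⥤ C}
    (η : ∀ X Y : C, (X ⟶ Y) ≃ₗ[k] Module.Dual k (Y ⟶ S.obj X))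
    (hη : ∀ (X Y Z : C) (u : X ⟶ Y) (v : Y ⟶ Z) (w : Z ⟶ S.obj X),
      η X Z (u ≫ v) w = η X Y u (v ≫ w))
    {X Y Z : C} {u : X ⟶ Y} {v : Y ⟶ Z} (huv : u ≫ v ≠ 0) :
    ∃ w : Z ⟶ S.obj X, v ≫ w ≠ 0 := by
  have hpair : η X Z (u ≫ v) ≠ 0 := by
    rwa [ne_eq, LinearEquiv.map_eq_zero_iff]
  obtain ⟨w, hw⟩ := DFunLike.ne_iff.mp hpair
  refine ⟨w, fun hvw => hw ?_⟩
  rw [hη, hvw, map_zero, LinearMap.zero_apply]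

/-- Let `T` be a `k`-linear Hom-finite triangulated category with Serre functor `S`
(encoded by the bifunctorial dualities `η`), let `X ∈ T` with `End X = k`, and let
`f : X ⟶ S X`.  Then for any `Y` and any `g : S X ⟶ Y` which is not a split
monomorphism, `f ≫ g = 0`. -/
theorem serre_composition_zero {k : Type u} [Field k]
    {T : Type v} [Category.{w} T] [Preadditive T] [Linear k T]
    [HasShift T ℤ] [Limits.HasZeroObject T] [∀ n : ℤ, (shiftFunctor T n).Additive]
    [Pretriangulated T] [IsTriangulated T]
    [homFin : ∀ X Y : T, Module.Finite k (X ⟶ Y)]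
    (S : T ⥤ T) [S.IsEquivalence]
    -- Serre duality data: `D Hom(A,B) ≅ Hom(B, S A)`, i.e. `Hom(A,B) ≅ D Hom(B, S A)`
    (η : ∀ X Y : T, (X ⟶ Y) ≃ₗ[k] Module.Dual k (Y ⟶ S.obj X))
    -- binaturality in the second variable
    (hη₁ : ∀ (X Y Z : T) (u : X ⟶ Y) (v : Y ⟶ Z) (w : Z ⟶ S.obj X),
      η X Z (u ≫ v) w = η X Y u (v ≫ w))
    -- binaturality in the first variable
    (hη₂ : ∀ (X' X Y : T) (a : X' ⟶ X) (u : X ⟶ Y) (w : Y ⟶ S.obj X'),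
      η X' Y (a ≫ u) w = η X Y u (w ≫ S.map a))
    (X : T) (hX : ∀ e : X ⟶ X, ∃ c : k, e = c • 𝟙 X)
    (Y : T) (f : X ⟶ S.obj X) (g : S.obj X ⟶ Y) (hg : ¬ IsSplitMono g) :
    f ≫ g = 0 := by
  by_contra hfg
  obtain ⟨w, hgw⟩ := exists_comp_ne_zero_of_serreDuality η hη₁ hfg
  rcases S.isIso_or_eq_zero_of_full (isIso_or_eq_zero_of_forall_eq_smul_id hX) (g ≫ w) with
    hiso | hzero
  · exact hg (isSplitMono_of_isIso_comp g w)
  · exact hgw hzero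
end
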